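/- arXiv:cs/0205018 — 3 statements merged into one kernel-verified Lean document; each statement's English description precedes it below -/
import Mathlib

section
/- In the type-changing calculus S'_tc, co-domains of strategies are determined by domains: for all well-formed contexts Γ, strategies s and term types τ₁, τ'₁, τ₂, τ'₂, if Γ ⊢ s : τ₁ → τ'₁, Γ ⊢ s : τ₂ → τ'₂ and τ'₁ ≠ τ'₂, then τ₁ ≠ τ₂. -/
namespace Sg

/-- Term types: sorts, the empty-tuple type, and pair types. -/
inductive TmTy where
  | sort : ℕ → TmTy
  | unit : TmTy
  | pair : TmTy → TmTy → TmTy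

/-- Terms: constants, function-symbol applications, variables, tuples. -/
inductive Tm where
  | con : String → Tm
  | fn : String → List Tm → Tm
  | var : String → Tm
  | unit : Tm
  | pair : Tm → Tm → Tm

/-- A (well-formed, non-overloading) context: declared sorts, and type
assignments for constant symbols, function symbols, and variables. -/
structure Ctx where
  sorts : Set ℕ
  conTy : String → Option ℕ
  fnTy : String → Option (List ℕ × ℕ)
  varTy : String → Option TmTy

/-- Well-formedness of term types. -/
inductive WfTy (Γ : Ctx) : TmTy → Prop where
  | sort {σ} : σ ∈ Γ.sorts → WfTy Γ (.sort σ)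
  | unit : WfTy Γ .unit
  | pair {τ₁ τ₂} : WfTy Γ τ₁ → WfTy Γ τ₂ → WfTy Γ (.pair τ₁ τ₂)

/-- Well-typedness of terms. -/
inductive HasTy (Γ : Ctx) : Tm → TmTy → Prop where
  | con {c σ} : Γ.conTy c = some σ → HasTy Γ (.con c) (.sort σ)
  | fn {f ts σs σ₀} : Γ.fnTy f = some (σs, σ₀) → ts ≠ [] →
      ts.length = σs.length →
      (∀ i (h₁ : i < ts.length) (h₂ : i < σs.length),
        HasTy Γ (ts.get ⟨i, h₁⟩) (.sort (σs.get ⟨i, h₂⟩))) →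
      HasTy Γ (.fn f ts) (.sort σ₀)
  | var {x τ} : Γ.varTy x = some τ → HasTy Γ (.var x) τ
  | unit : HasTy Γ .unit .unit
  | pair {t₁ t₂ τ₁ τ₂} : HasTy Γ t₁ τ₁ → HasTy Γ t₂ τ₂ →
      HasTy Γ (.pair t₁ t₂) (.pair τ₁ τ₂)

/-- Ground terms (no variables). -/
inductive Ground : Tm → Prop where
  | con {c} : Ground (.con c)
  | fn {f ts} : (∀ t ∈ ts, Ground t) → Ground (.fn f ts)
  | unit : Ground .unit
  | pair {t₁ t₂} : Ground t₁ → Ground t₂ → Ground (.pair t₁ t₂)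

/-- Application of a substitution to a term. -/
def applySubst (θ : String → Tm) : Tm → Tm
  | .con c => .con c
  | .fn f ts => .fn f (ts.attach.map (fun ⟨t, h⟩ => applySubst θ t))
  | .var x => θ x
  | .unit => .unit
  | .pair a b => .pair (applySubst θ a) (applySubst θ b)
decreasing_by
  all_goals simp_wf
  all_goals first
    | (have := List.sizeOf_lt_of_mem h; omega)
    | omega

/-- Strategy types: many-sorted arrow types, the generic type TP,
generic type-unifying types TU(τ), and overloaded types π&π. -/
inductive Pit where
  | ms : TmTy → TmTy → Pit
  | tp : Pit
  | tu : TmTy → Pit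
  | amp : Pit → Pit → Pit

/-- Genericity relation of the calculus S'_TP (only TP is generic). -/
inductive LessTP (Γ : Ctx) : Pit → Pit → Prop where
  | tp {τ} : WfTy Γ τ → LessTP Γ (.ms τ τ) .tp

/-- Reflexive closure of `LessTP`. -/
def LessEqTP (Γ : Ctx) (π π' : Pit) : Prop := π = π' ∨ LessTP Γ π π'

/-- Genericity relation of the full calculus S'_γ (TP and TU(τ) generic). -/
inductive LessU (Γ : Ctx) : Pit → Pit → Prop where
  | tp {τ} : WfTy Γ τ → LessU Γ (.ms τ τ) .tp
  | tu {τ' τ} : WfTy Γ τ' → WfTy Γ τ → LessU Γ (.ms τ' τ) (.tu τ)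

/-- Reflexive closure of `LessU`. -/
def LessEqU (Γ : Ctx) (π π' : Pit) : Prop := π = π' ∨ LessU Γ π π'

/-- Generic strategy types. -/
def GenericP (π : Pit) : Prop := π = .tp ∨ ∃ τ, π = .tu τ

/-- Strategies. -/
inductive St where
  | rule : Tm → Tm → St
  | id : St
  | fail : St
  | seq : St → St → St
  | choice : St → St → St
  | neg : St → St
  | congC : String → St
  | congF : String → List St → St
  | all : St → St
  | one : St → St
  | reduceC : St → St → St
  | select : St → St
  | voidS : St
  | spawn : St → St → St
  | ext : St → Pit → St
  | restr : St → Pit → St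
  | ann : St → Pit → St
  | amp : St → St → St

/-- Typing of the many-sorted type-preserving calculus S'_tp. -/
inductive StTyP (Γ : Ctx) : St → TmTy → TmTy → Prop where
  | rule {tl tr τ} : HasTy Γ tl τ → HasTy Γ tr τ → StTyP Γ (.rule tl tr) τ τ
  | id {τ} : WfTy Γ τ → StTyP Γ .id τ τ
  | fail {τ} : WfTy Γ τ → StTyP Γ .fail τ τ
  | neg {s τ} : StTyP Γ s τ τ → StTyP Γ (.neg s) τ τ
  | seq {s₁ s₂ τ} : StTyP Γ s₁ τ τ → StTyP Γ s₂ τ τ → StTyP Γ (.seq s₁ s₂) τ τ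
  | choice {s₁ s₂ τ τ'} : StTyP Γ s₁ τ τ' → StTyP Γ s₂ τ τ' →
      StTyP Γ (.choice s₁ s₂) τ τ'
  | congC {c σ} : Γ.conTy c = some σ → StTyP Γ (.congC c) (.sort σ) (.sort σ)
  | congF {f ss σs σ₀} : Γ.fnTy f = some (σs, σ₀) → ss.length = σs.length →
      (∀ i (h₁ : i < ss.length) (h₂ : i < σs.length),
        StTyP Γ (ss.get ⟨i, h₁⟩) (.sort (σs.get ⟨i, h₂⟩)) (.sort (σs.get ⟨i, h₂⟩))) →
      StTyP Γ (.congF f ss) (.sort σ₀) (.sort σ₀)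

/-- Typing of the many-sorted, possibly type-changing calculus S'_tc. -/
inductive StTyC (Γ : Ctx) : St → TmTy → TmTy → Prop where
  | rule {tl tr τ τ'} : HasTy Γ tl τ → HasTy Γ tr τ' → StTyC Γ (.rule tl tr) τ τ'
  | id {τ} : WfTy Γ τ → StTyC Γ .id τ τ
  | fail {τ} : WfTy Γ τ → StTyC Γ .fail τ τ
  | neg {s τ τ'} : StTyC Γ s τ τ' → StTyC Γ (.neg s) τ τ
  | seq {s₁ s₂ τ τs τ'} : StTyC Γ s₁ τ τs → StTyC Γ s₂ τs τ' →
      StTyC Γ (.seq s₁ s₂) τ τ'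
  | choice {s₁ s₂ τ τ'} : StTyC Γ s₁ τ τ' → StTyC Γ s₂ τ τ' →
      StTyC Γ (.choice s₁ s₂) τ τ'
  | congC {c σ} : Γ.conTy c = some σ → StTyC Γ (.congC c) (.sort σ) (.sort σ)
  | congF {f ss σs σ₀} : Γ.fnTy f = some (σs, σ₀) → ss.length = σs.length →
      (∀ i (h₁ : i < ss.length) (h₂ : i < σs.length),
        StTyC Γ (ss.get ⟨i, h₁⟩) (.sort (σs.get ⟨i, h₂⟩)) (.sort (σs.get ⟨i, h₂⟩))) →
      StTyC Γ (.congF f ss) (.sort σ₀) (.sort σ₀)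

/-- Typing of the calculus S'_TP with the generic type TP
(no implicit restriction). -/
inductive StTyG (Γ : Ctx) : St → Pit → Prop where
  | rule {tl tr τ} : HasTy Γ tl τ → HasTy Γ tr τ → StTyG Γ (.rule tl tr) (.ms τ τ)
  | id : StTyG Γ .id .tp
  | fail : StTyG Γ .fail .tp
  | negMs {s τ} : StTyG Γ s (.ms τ τ) → StTyG Γ (.neg s) (.ms τ τ)
  | negTp {s} : StTyG Γ s .tp → StTyG Γ (.neg s) .tp
  | seqMs {s₁ s₂ τ} : StTyG Γ s₁ (.ms τ τ) → StTyG Γ s₂ (.ms τ τ) →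
      StTyG Γ (.seq s₁ s₂) (.ms τ τ)
  | seqTp {s₁ s₂} : StTyG Γ s₁ .tp → StTyG Γ s₂ .tp → StTyG Γ (.seq s₁ s₂) .tp
  | choice {s₁ s₂ π} : StTyG Γ s₁ π → StTyG Γ s₂ π → StTyG Γ (.choice s₁ s₂) π
  | congC {c σ} : Γ.conTy c = some σ →
      StTyG Γ (.congC c) (.ms (.sort σ) (.sort σ))
  | congF {f ss σs σ₀} : Γ.fnTy f = some (σs, σ₀) → ss.length = σs.length →
      (∀ i (h₁ : i < ss.length) (h₂ : i < σs.length),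
        StTyG Γ (ss.get ⟨i, h₁⟩) (.ms (.sort (σs.get ⟨i, h₂⟩)) (.sort (σs.get ⟨i, h₂⟩)))) →
      StTyG Γ (.congF f ss) (.ms (.sort σ₀) (.sort σ₀))
  | all {s} : StTyG Γ s .tp → StTyG Γ (.all s) .tp
  | one {s} : StTyG Γ s .tp → StTyG Γ (.one s) .tp
  | ext {s π π'} : StTyG Γ s π' → LessTP Γ π' π → StTyG Γ (.ext s π) π
  | restr {s π π'} : StTyG Γ s π' → LessTP Γ π π' → StTyG Γ (.restr s π) π

/-- Big-step reduction of strategy applications: `Red Γ s t r` means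
`s @ t ⇝ r`, where `r = some t'` is a proper term reduct and `r = none`
is failure `↑`. -/
inductive Red (Γ : Ctx) : St → Tm → Option Tm → Prop where
  | rulePos {tl tr t t'} {θ : String → Tm} :
      applySubst θ tl = t → applySubst θ tr = t' →
      Red Γ (.rule tl tr) t (some t')
  | ruleNeg {tl tr t} : (∀ θ : String → Tm, applySubst θ tl ≠ t) →
      Red Γ (.rule tl tr) t none
  | idPos {t} : Red Γ .id t (some t)
  | failNeg {t} : Red Γ .fail t none
  | negPos {s t} : Red Γ s t none → Red Γ (.neg s) t (some t)
  | negNeg {s t t'} : Red Γ s t (some t') → Red Γ (.neg s) t none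
  | seqPos {s₁ s₂ t t₁ t'} : Red Γ s₁ t (some t₁) → Red Γ s₂ t₁ (some t') →
      Red Γ (.seq s₁ s₂) t (some t')
  | seqNeg₁ {s₁ s₂ t} : Red Γ s₁ t none → Red Γ (.seq s₁ s₂) t none
  | seqNeg₂ {s₁ s₂ t t₁} : Red Γ s₁ t (some t₁) → Red Γ s₂ t₁ none →
      Red Γ (.seq s₁ s₂) t none
  | choicePos₁ {s₁ s₂ t t'} : Red Γ s₁ t (some t') →
      Red Γ (.choice s₁ s₂) t (some t')
  | choicePos₂ {s₁ s₂ t t'} : Red Γ s₂ t (some t') →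
      Red Γ (.choice s₁ s₂) t (some t')
  | choiceNeg {s₁ s₂ t} : Red Γ s₁ t none → Red Γ s₂ t none →
      Red Γ (.choice s₁ s₂) t none
  | congCPos {c} : Red Γ (.congC c) (.con c) (some (.con c))
  | congCNeg {c t} : t ≠ .con c → Red Γ (.congC c) t none
  | congFPos {f ss ts ts'} : ts ≠ [] → ss.length = ts.length →
      ts.length = ts'.length →
      (∀ i (h₀ : i < ss.length) (h₁ : i < ts.length) (h₂ : i < ts'.length),
        Red Γ (ss.get ⟨i, h₀⟩) (ts.get ⟨i, h₁⟩) (some (ts'.get ⟨i, h₂⟩))) →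
      Red Γ (.congF f ss) (.fn f ts) (some (.fn f ts'))
  | congFNegHead {f ss t} : (∀ ts, t ≠ .fn f ts) → Red Γ (.congF f ss) t none
  | congFNegChild {f ss ts i} (h₀ : i < ss.length) (h₁ : i < ts.length) :
      ts ≠ [] → ss.length = ts.length →
      Red Γ (ss.get ⟨i, h₀⟩) (ts.get ⟨i, h₁⟩) none →
      Red Γ (.congF f ss) (.fn f ts) none
  | allCon {s c} : Red Γ (.all s) (.con c) (some (.con c))
  | allPos {s f ts ts'} : ts ≠ [] → ts.length = ts'.length →
      (∀ i (h₁ : i < ts.length) (h₂ : i < ts'.length),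
        Red Γ s (ts.get ⟨i, h₁⟩) (some (ts'.get ⟨i, h₂⟩))) →
      Red Γ (.all s) (.fn f ts) (some (.fn f ts'))
  | allNeg {s f ts i} (h : i < ts.length) : ts ≠ [] →
      Red Γ s (ts.get ⟨i, h⟩) none → Red Γ (.all s) (.fn f ts) none
  | oneCon {s c} : Red Γ (.one s) (.con c) none
  | onePos {s f ts t' i} (h : i < ts.length) :
      Red Γ s (ts.get ⟨i, h⟩) (some t') →
      Red Γ (.one s) (.fn f ts) (some (.fn f (ts.set i t')))
  | oneNeg {s f ts} : ts ≠ [] →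
      (∀ i (h : i < ts.length), Red Γ s (ts.get ⟨i, h⟩) none) →
      Red Γ (.one s) (.fn f ts) none
  | voidPos {t} : Red Γ .voidS t (some .unit)
  | spawnPos {s₁ s₂ t t₁ t₂} : Red Γ s₁ t (some t₁) → Red Γ s₂ t (some t₂) →
      Red Γ (.spawn s₁ s₂) t (some (.pair t₁ t₂))
  | spawnNeg₁ {s₁ s₂ t} : Red Γ s₁ t none → Red Γ (.spawn s₁ s₂) t none
  | spawnNeg₂ {s₁ s₂ t} : Red Γ s₂ t none → Red Γ (.spawn s₁ s₂) t none
  | extApp {s π π' t τ r} : StTyG Γ s π' → HasTy Γ t τ →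
      (∃ τ', LessEqTP Γ (.ms τ τ') π') → Red Γ s t r → Red Γ (.ext s π) t r
  | extNeg {s π π' t τ} : StTyG Γ s π' → HasTy Γ t τ →
      (¬ ∃ τ', LessEqTP Γ (.ms τ τ') π') → Red Γ (.ext s π) t none
  | restrApp {s π t r} : Red Γ s t r → Red Γ (.restr s π) t r

/-- Typing of the full calculus S'_γ (type-preserving and type-unifying
generic types, type-changing many-sorted strategies, tuples). -/
inductive StTyU (Γ : Ctx) : St → Pit → Prop where
  | rule {tl tr τ τ'} : HasTy Γ tl τ → HasTy Γ tr τ' →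
      StTyU Γ (.rule tl tr) (.ms τ τ')
  | id : StTyU Γ .id .tp
  | fail : StTyU Γ .fail .tp
  | negMs {s τ τ'} : StTyU Γ s (.ms τ τ') → StTyU Γ (.neg s) (.ms τ τ)
  | negGen {s π} : StTyU Γ s π → GenericP π → StTyU Γ (.neg s) .tp
  | seqMs {s₁ s₂ τ τs τ'} : StTyU Γ s₁ (.ms τ τs) → StTyU Γ s₂ (.ms τs τ') →
      StTyU Γ (.seq s₁ s₂) (.ms τ τ')
  | seqTpG {s₁ s₂ π} : StTyU Γ s₁ .tp → StTyU Γ s₂ π → GenericP π →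
      StTyU Γ (.seq s₁ s₂) π
  | seqTuMs {s₁ s₂ τ τ'} : StTyU Γ s₁ (.tu τ) → StTyU Γ s₂ (.ms τ τ') →
      StTyU Γ (.seq s₁ s₂) (.tu τ')
  | choice {s₁ s₂ π} : StTyU Γ s₁ π → StTyU Γ s₂ π → StTyU Γ (.choice s₁ s₂) π
  | congC {c σ} : Γ.conTy c = some σ →
      StTyU Γ (.congC c) (.ms (.sort σ) (.sort σ))
  | congF {f ss σs σ₀} : Γ.fnTy f = some (σs, σ₀) → ss.length = σs.length →
      (∀ i (h₁ : i < ss.length) (h₂ : i < σs.length),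
        StTyU Γ (ss.get ⟨i, h₁⟩) (.ms (.sort (σs.get ⟨i, h₂⟩)) (.sort (σs.get ⟨i, h₂⟩)))) →
      StTyU Γ (.congF f ss) (.ms (.sort σ₀) (.sort σ₀))
  | all {s} : StTyU Γ s .tp → StTyU Γ (.all s) .tp
  | one {s} : StTyU Γ s .tp → StTyU Γ (.one s) .tp
  | red {splus s τ} : StTyU Γ splus (.ms (.pair τ τ) τ) → StTyU Γ s (.tu τ) →
      StTyU Γ (.reduceC splus s) (.tu τ)
  | select {s τ} : StTyU Γ s (.tu τ) → StTyU Γ (.select s) (.tu τ)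
  | voidS : StTyU Γ .voidS (.tu .unit)
  | spawn {s₁ s₂ τ₁ τ₂} : StTyU Γ s₁ (.tu τ₁) → StTyU Γ s₂ (.tu τ₂) →
      StTyU Γ (.spawn s₁ s₂) (.tu (.pair τ₁ τ₂))
  | ext {s π π'} : StTyU Γ s π' → LessU Γ π' π → StTyU Γ (.ext s π) π
  | restr {s π π'} : StTyU Γ s π' → LessU Γ π π' → StTyU Γ (.restr s π) π

/-- Left-biased choice `s₁ ←+ s₂`, desugared as `s₁ + (¬s₁ ; s₂)`. -/
def lchoice (s₁ s₂ : St) : St := .choice s₁ (.seq (.neg s₁) s₂)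

end Sg

namespace Sg

theorem hasTy_unique {Γ : Ctx} {t : Tm} {τ₁ τ₂ : TmTy}
    (h₁ : HasTy Γ t τ₁) (h₂ : HasTy Γ t τ₂) : τ₁ = τ₂ := by
  induction h₁ generalizing τ₂ with
  | con hc => cases h₂ with | con hc' => rw [hc] at hc'; injection hc' with h; rw [h]
  | fn hf _ _ _ _ => cases h₂ with
    | fn hf' => rw [hf] at hf'; injection hf' with h; rw [(Prod.mk.injEq ..).mp h |>.2]
  | var hv => cases h₂ with | var hv' => rw [hv] at hv'; injection hv'
  | unit => cases h₂; rfl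
  | pair _ _ ih₁ ih₂ => cases h₂ with
    | pair ha hb => rw [ih₁ ha, ih₂ hb]

theorem stc_det {Γ : Ctx} {s : St} {τ₁ τ'₁ τ₂ τ'₂ : TmTy}
    (h₁ : StTyC Γ s τ₁ τ'₁) (h₂ : StTyC Γ s τ₂ τ'₂) (h : τ₁ = τ₂) :
    τ'₁ = τ'₂ := by
  induction h₁ generalizing τ₂ τ'₂ with
  | rule _ hr => cases h₂ with | rule _ hr' => exact hasTy_unique hr hr'
  | id _ => cases h₂; exact h
  | fail _ => cases h₂; exact h
  | neg _ _ => cases h₂; exact h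
  | seq hA hB ihA ihB => cases h₂ with
    | seq hA' hB' => exact ihB hB' (ihA hA' h)
  | choice _ _ ih₁ _ => cases h₂ with
    | choice hA' _ => exact ih₁ hA' h
  | congC _ => cases h₂; exact h
  | congF _ _ _ _ => cases h₂; exact h

/-- in S'_tc, co-domains of strategies are determined by
domains. -/
theorem stc_codomain_determined :
    ∀ (Γ : Ctx) (s : St) (τ₁ τ'₁ τ₂ τ'₂ : TmTy),
      StTyC Γ s τ₁ τ'₁ → StTyC Γ s τ₂ τ'₂ → τ'₁ ≠ τ'₂ → τ₁ ≠ τ₂ := by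
  intro Γ s τ₁ τ'₁ τ₂ τ'₂ h₁ h₂ hne heq
  exact hne (stc_det h₁ h₂ heq)

end Sg
end

section
/- In the calculus S'_TP with the generic type TP, well-typed strategies satisfy unicity of typing: for all well-formed contexts Γ, strategies s and strategy types π, π', if Γ ⊢ s : π and Γ ⊢ s : π' then π = π'. -/
namespace Sg

theorem hasTy_unique_s6 {Γ : Ctx} {t : Tm} {τ τ' : TmTy}
    (h1 : HasTy Γ t τ) (h2 : HasTy Γ t τ') : τ = τ' := by
  induction h1 generalizing τ' with
  | con hc => cases h2 with | con hc' => rw [hc] at hc'; injection hc' with h; rw [h]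
  | fn hf _ _ _ => cases h2 with
    | fn hf' => rw [hf] at hf'; injection hf' with h; injection h with h1 h2; rw [h2]
  | var hv => cases h2 with | var hv' => rw [hv] at hv'; injection hv'
  | unit => cases h2; rfl
  | pair _ _ ih1 ih2 => cases h2 with
    | pair ha hb => rw [ih1 ha, ih2 hb]

/-- in S'_TP, well-typed strategies satisfy unicity of
typing. -/
theorem stp_gen_strategy_uot :
    ∀ (Γ : Ctx) (s : St) (π π' : Pit),
      StTyG Γ s π → StTyG Γ s π' → π = π' := by
  intro Γ s π π' h1 h2
  induction h1 generalizing π' with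
  | rule htl _ => cases h2 with
    | rule htl' _ => rw [hasTy_unique_s6 htl htl']
  | id => cases h2; rfl
  | fail => cases h2; rfl
  | negMs _ ih => cases h2 with
    | negMs h => rw [ih _ h]
    | negTp h => exact ih _ h
  | negTp _ ih => cases h2 with
    | negMs h => exact (ih _ h).symm ▸ rfl
    | negTp h => rfl
  | seqMs ha _ ih _ => cases h2 with
    | seqMs ha' _ => rw [ih _ ha']
    | seqTp ha' _ => exact ih _ ha'
  | seqTp ha _ ih _ => cases h2 with
    | seqMs ha' _ => exact ih _ ha'
    | seqTp _ _ => rfl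
  | choice _ _ ih _ => cases h2 with
    | choice ha _ => exact ih _ ha
  | congC hc => cases h2 with
    | congC hc' => rw [hc] at hc'; injection hc' with h; rw [h]
  | congF hf _ _ _ => cases h2 with
    | congF hf' _ _ => rw [hf] at hf'; injection hf' with h; injection h with h1 h2; rw [h2]
  | all _ ih => cases h2 with | all _ => rfl
  | one _ ih => cases h2 with | one _ => rfl
  | ext _ hl => cases h2 with
    | ext _ hl' => cases hl; cases hl'; rfl
  | restr _ _ => cases h2 with
    | restr _ _ => rfl

end Sg
end

section
/- Well-typedness of type-unifying combinators composes correctly: if Γ ⊢ s₁ : TU(τ₁) and Γ ⊢ s₂ : TU(τ₂) then Γ ⊢ (s₁ ∥ s₂) : TU(⟨τ₁,τ₂⟩); and subject reduction holds for ∥ and for the build-empty-tuple combinator: if Γ ⊢ t : τ, (s₁ ∥ s₂) @ t ⇝ t'' with s₁ @ t ⇝ t'₁, s₂ @ t ⇝ t'₂ and t'' = ⟨t'₁,t'₂⟩, and each sᵢ satisfies subject reduction for TU(τᵢ), then Γ ⊢ t'' : ⟨τ₁,τ₂⟩; similarly the combinator '⊥' applied to any well-typed term yields the empty tuple ⟨⟩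 of type ⟨⟩. -/
namespace Sg

/-- A strategy `s` satisfies subject reduction for the type `TU(τ)`:
whenever it is applied to a well-typed term and yields a term, the
result has type τ. -/
def SRtu (Γ : Ctx) (s : St) (τ : TmTy) : Prop :=
  ∀ (t : Tm) (τ'' : TmTy) (t' : Tm),
    HasTy Γ t τ'' → Red Γ s t (some t') → HasTy Γ t' τ

/-- well-typedness and subject reduction of the
type-unifying combinators `∥` and `⊥`. -/
theorem tu_combinators
    (Γ : Ctx) (s₁ s₂ : St) (τ₁ τ₂ : TmTy)
    (h₁ : StTyU Γ s₁ (.tu τ₁)) (h₂ : StTyU Γ s₂ (.tu τ₂)) :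
    StTyU Γ (.spawn s₁ s₂) (.tu (.pair τ₁ τ₂)) ∧
    (∀ (t : Tm) (τ : TmTy) (t'₁ t'₂ : Tm),
      HasTy Γ t τ → SRtu Γ s₁ τ₁ → SRtu Γ s₂ τ₂ →
      Red Γ s₁ t (some t'₁) → Red Γ s₂ t (some t'₂) →
      Red Γ (.spawn s₁ s₂) t (some (.pair t'₁ t'₂)) →
      HasTy Γ (.pair t'₁ t'₂) (.pair τ₁ τ₂)) ∧
    (∀ (t : Tm) (τ : TmTy), HasTy Γ t τ →
      Red Γ .voidS t (some .unit) ∧ HasTy Γ .unit .unit) := by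
  refine ⟨.spawn h₁ h₂, ?_, fun t τ ht => ⟨.voidPos, .unit⟩⟩
  intro t τ t'₁ t'₂ ht sr₁ sr₂ r₁ r₂ _
  exact .pair (sr₁ t τ t'₁ ht r₁) (sr₂ t τ t'₂ ht r₂)

end Sg
end
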